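/- Suppose g_{n,k} > 0 and δ_n² > 0 for all n, k, and let p^UL be the unique optimal power vector of the uplink sum-power problem (P_sum^UL). For every initial vector p(0) with all entries strictly positive, the sequence generated by the ULSum iteration p(t+1) = p̄_sum · T(p(t)) / (Σ_{k=1}^K T_k(p(t))) converges to p^UL at a geometric rate: there exist a constant C ≥ 0 and κ ∈ (0,1) such that ‖p(t) − p^UL‖ ≤ C κ^t for all t. -/

import Mathlib

open Finset

/-- Uplink SINR of user `k` under power vector `p` and BS association `a`. -/
noncomputable def SINRul {N K : ℕ} (g : Fin N → Fin K → ℝ) (δsq : Fin N → ℝ)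
    (p : Fin K → ℝ) (a : Fin K → Fin N) (k : Fin K) : ℝ :=
  g (a k) k * p k / (δsq (a k) + ∑ j ∈ Finset.univ.erase k, g (a k) j * p j)

/-- Minimum power needed by user `k` to achieve SINR 1 when associated with BS `n`. -/
noncomputable def Tkn {N K : ℕ} (g : Fin N → Fin K → ℝ) (δsq : Fin N → ℝ)
    (n : Fin N) (k : Fin K) (p : Fin K → ℝ) : ℝ :=
  (δsq n + ∑ j ∈ Finset.univ.erase k, g n j * p j) / g n k

/-- Minimum power needed by user `k` to achieve SINR 1, over all BS choices. -/
noncomputable def Tk {N K : ℕ} (g : Fin N → Fin K → ℝ) (δsq : Fin N → ℝ)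
    (k : Fin K) (p : Fin K → ℝ) : ℝ :=
  ⨅ n, Tkn g δsq n k p

section Aux
variable {N K : ℕ} {g : Fin N → Fin K → ℝ} {δsq : Fin N → ℝ}

lemma Tkn_pos (hg : ∀ n k, 0 < g n k) (hδ : ∀ n, 0 < δsq n)
    {p : Fin K → ℝ} (hp : ∀ j, 0 ≤ p j) (n : Fin N) (k : Fin K) :
    0 < Tkn g δsq n k p := by
  apply div_pos _ (hg n k)
  have h : 0 ≤ ∑ j ∈ univ.erase k, g n j * p j :=
    Finset.sum_nonneg fun j _ => mul_nonneg (hg n j).le (hp j)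
  linarith [hδ n]

lemma Tk_le (hN : 0 < N) (k : Fin K) (p : Fin K → ℝ) (n : Fin N) :
    Tk g δsq k p ≤ Tkn g δsq n k p := by
  haveI : Nonempty (Fin N) := ⟨⟨0, hN⟩⟩
  exact ciInf_le (Set.Finite.bddBelow (Set.finite_range _)) n

lemma le_Tk (hN : 0 < N) {x : ℝ} {k : Fin K} {p : Fin K → ℝ}
    (h : ∀ n, x ≤ Tkn g δsq n k p) : x ≤ Tk g δsq k p := by
  haveI : Nonempty (Fin N) := ⟨⟨0, hN⟩⟩
  exact le_ciInf h

lemma Tk_attained (hN : 0 < N) (k : Fin K) (p : Fin K → ℝ) :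
    ∃ n, Tk g δsq k p = Tkn g δsq n k p := by
  obtain ⟨n0, -, hmin⟩ := Finset.exists_min_image Finset.univ
    (fun n => Tkn g δsq n k p) ⟨⟨0, hN⟩, Finset.mem_univ _⟩
  exact ⟨n0, le_antisymm (Tk_le hN k p n0) (le_Tk hN fun n => hmin n (Finset.mem_univ n))⟩

lemma Tk_pos (hN : 0 < N) (hg : ∀ n k, 0 < g n k) (hδ : ∀ n, 0 < δsq n)
    {p : Fin K → ℝ} (hp : ∀ j, 0 ≤ p j) (k : Fin K) :
    0 < Tk g δsq k p := by
  obtain ⟨n, hn⟩ := Tk_attained (g := g) (δsq := δsq) hN k p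
  rw [hn]; exact Tkn_pos hg hδ hp n k

lemma Tkn_mono (hg : ∀ n k, 0 < g n k) {p q : Fin K → ℝ}
    (hpq : ∀ j, p j ≤ q j) (n : Fin N) (k : Fin K) :
    Tkn g δsq n k p ≤ Tkn g δsq n k q := by
  unfold Tkn
  rw [div_le_div_iff_of_pos_right (hg n k)]
  gcongr with j hj
  · exact (hg n j).le
  · exact hpq j

lemma Tk_mono (hN : 0 < N) (hg : ∀ n k, 0 < g n k) {p q : Fin K → ℝ}
    (hpq : ∀ j, p j ≤ q j) (k : Fin K) :
    Tk g δsq k p ≤ Tk g δsq k q :=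
  le_Tk hN fun n => (Tk_le hN k p n).trans (Tkn_mono hg hpq n k)

lemma Tk_upper (hN : 0 < N) (hg : ∀ n k, 0 < g n k)
    {p q : Fin K → ℝ} {c M : ℝ} (hc : 0 ≤ c) (hM : 1 ≤ M)
    (hcq : ∀ n k, c * Tkn g δsq n k q ≤ δsq n / g n k)
    (hpq : ∀ j, p j ≤ M * q j) (k : Fin K) :
    Tk g δsq k p ≤ (M - (M - 1) * c) * Tk g δsq k q := by
  obtain ⟨n0, hn0⟩ := Tk_attained (g := g) (δsq := δsq) hN k q
  have h1 : Tk g δsq k p ≤ Tkn g δsq n0 k p := Tk_le hN k p n0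
  have h2 : Tkn g δsq n0 k p ≤ (δsq n0 + M * ∑ j ∈ univ.erase k, g n0 j * q j) / g n0 k := by
    unfold Tkn
    rw [div_le_div_iff_of_pos_right (hg n0 k)]
    have : ∑ j ∈ univ.erase k, g n0 j * p j ≤ M * ∑ j ∈ univ.erase k, g n0 j * q j := by
      rw [Finset.mul_sum]
      apply Finset.sum_le_sum
      intro j hj
      calc g n0 j * p j ≤ g n0 j * (M * q j) := by
            exact mul_le_mul_of_nonneg_left (hpq j) (hg n0 j).le
        _ = M * (g n0 j * q j) := by ring
    linarith
  have h3 : (δsq n0 + M * ∑ j ∈ univ.erase k, g n0 j * q j) / g n0 k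
      = M * Tkn g δsq n0 k q - (M - 1) * (δsq n0 / g n0 k) := by
    unfold Tkn
    field_simp
    ring
  have h4 : M * Tkn g δsq n0 k q - (M - 1) * (δsq n0 / g n0 k)
      ≤ M * Tkn g δsq n0 k q - (M - 1) * (c * Tkn g δsq n0 k q) := by
    have := hcq n0 k
    nlinarith [hcq n0 k]
  calc Tk g δsq k p ≤ _ := h1
    _ ≤ _ := h2
    _ = _ := h3
    _ ≤ _ := h4
    _ = (M - (M - 1) * c) * Tkn g δsq n0 k q := by ring
    _ = (M - (M - 1) * c) * Tk g δsq k q := by rw [hn0]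

lemma Tk_lower (hN : 0 < N) (hg : ∀ n k, 0 < g n k)
    {p q : Fin K → ℝ} {c m : ℝ} (hc : 0 ≤ c) (hm0 : 0 ≤ m) (hm1 : m ≤ 1)
    (hcq : ∀ n k, c * Tkn g δsq n k q ≤ δsq n / g n k)
    (hpq : ∀ j, m * q j ≤ p j) (k : Fin K) :
    (m + (1 - m) * c) * Tk g δsq k q ≤ Tk g δsq k p := by
  obtain ⟨n1, hn1⟩ := Tk_attained (g := g) (δsq := δsq) hN k p
  have h2 : (δsq n1 + m * ∑ j ∈ univ.erase k, g n1 j * q j) / g n1 k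
      ≤ Tkn g δsq n1 k p := by
    unfold Tkn
    rw [div_le_div_iff_of_pos_right (hg n1 k)]
    have : m * ∑ j ∈ univ.erase k, g n1 j * q j ≤ ∑ j ∈ univ.erase k, g n1 j * p j := by
      rw [Finset.mul_sum]
      apply Finset.sum_le_sum
      intro j hj
      calc m * (g n1 j * q j) = g n1 j * (m * q j) := by ring
        _ ≤ g n1 j * p j := mul_le_mul_of_nonneg_left (hpq j) (hg n1 j).le
    linarith
  have h3 : (δsq n1 + m * ∑ j ∈ univ.erase k, g n1 j * q j) / g n1 k
      = m * Tkn g δsq n1 k q + (1 - m) * (δsq n1 / g n1 k) := by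
    unfold Tkn
    field_simp
    ring
  have h4 : m * Tkn g δsq n1 k q + (1 - m) * (c * Tkn g δsq n1 k q)
      ≤ m * Tkn g δsq n1 k q + (1 - m) * (δsq n1 / g n1 k) := by
    nlinarith [hcq n1 k]
  have h5 : (m + (1 - m) * c) * Tk g δsq k q ≤ (m + (1 - m) * c) * Tkn g δsq n1 k q := by
    apply mul_le_mul_of_nonneg_left (Tk_le hN k q n1)
    nlinarith
  calc (m + (1 - m) * c) * Tk g δsq k q ≤ (m + (1 - m) * c) * Tkn g δsq n1 k q := h5
    _ = m * Tkn g δsq n1 k q + (1 - m) * (c * Tkn g δsq n1 k q) := by ring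
    _ ≤ _ := h4
    _ = _ := h3.symm
    _ ≤ _ := h2
    _ = Tk g δsq k p := hn1.symm

lemma Tk_lip (hN : 0 < N) (hg : ∀ n k, 0 < g n k)
    {L : ℝ} (hL : ∀ n k, (∑ j, g n j) / g n k ≤ L)
    (p q : Fin K → ℝ) (k : Fin K) :
    Tk g δsq k p ≤ Tk g δsq k q + L * dist p q := by
  obtain ⟨n1, hn1⟩ := Tk_attained (g := g) (δsq := δsq) hN k q
  have h1 : Tk g δsq k p ≤ Tkn g δsq n1 k p := Tk_le hN k p n1
  have h2 : Tkn g δsq n1 k p ≤ Tkn g δsq n1 k q + L * dist p q := by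
    unfold Tkn
    rw [div_add' _ _ _ (hg n1 k).ne', div_le_div_iff_of_pos_right (hg n1 k)]
    have hsum : ∑ j ∈ univ.erase k, g n1 j * p j
        ≤ (∑ j ∈ univ.erase k, g n1 j * q j) + (∑ j, g n1 j) * dist p q := by
      have step : ∀ j ∈ univ.erase k, g n1 j * p j ≤ g n1 j * q j + g n1 j * dist p q := by
        intro j hj
        have hd : p j - q j ≤ dist p q := by
          have := dist_le_pi_dist p q j
          rw [Real.dist_eq] at this
          have := le_abs_self (p j - q j)
          linarith
        nlinarith [hg n1 j]
      calc ∑ j ∈ univ.erase k, g n1 j * p j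
          ≤ ∑ j ∈ univ.erase k, (g n1 j * q j + g n1 j * dist p q) :=
            Finset.sum_le_sum step
        _ = (∑ j ∈ univ.erase k, g n1 j * q j) + (∑ j ∈ univ.erase k, g n1 j) * dist p q := by
            rw [Finset.sum_add_distrib, Finset.sum_mul]
        _ ≤ (∑ j ∈ univ.erase k, g n1 j * q j) + (∑ j, g n1 j) * dist p q := by
            have : (∑ j ∈ univ.erase k, g n1 j) ≤ ∑ j, g n1 j :=
              Finset.sum_le_sum_of_subset_of_nonneg (Finset.erase_subset _ _)
                (fun j _ _ => (hg n1 j).le)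
            nlinarith [dist_nonneg (x := p) (y := q)]
    have hLg : (∑ j, g n1 j) * dist p q ≤ L * dist p q * g n1 k := by
      have h := hL n1 k
      rw [div_le_iff₀ (hg n1 k)] at h
      nlinarith [dist_nonneg (x := p) (y := q), hg n1 k]
    linarith
  rw [hn1]
  linarith

lemma Tk_bounds (hN : 0 < N) (hg : ∀ n k, 0 < g n k) (hδ : ∀ n, 0 < δsq n)
    {S tmin tmax : ℝ}
    (ht1 : ∀ n k, tmin ≤ δsq n / g n k)
    (ht2 : ∀ n k, (δsq n + (∑ j, g n j) * S) / g n k ≤ tmax)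
    {q : Fin K → ℝ} (hq0 : ∀ j, 0 ≤ q j) (hqs : ∑ j, q j ≤ S) (k : Fin K) :
    tmin ≤ Tk g δsq k q ∧ Tk g δsq k q ≤ tmax := by
  have hqS : ∀ j, q j ≤ S := by
    intro j
    calc q j ≤ ∑ i, q i := Finset.single_le_sum (fun i _ => hq0 i) (Finset.mem_univ j)
      _ ≤ S := hqs
  constructor
  · obtain ⟨n1, hn1⟩ := Tk_attained (g := g) (δsq := δsq) hN k q
    rw [hn1]
    refine (ht1 n1 k).trans ?_
    unfold Tkn
    rw [div_le_div_iff_of_pos_right (hg n1 k)]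
    have : 0 ≤ ∑ j ∈ univ.erase k, g n1 j * q j :=
      Finset.sum_nonneg fun j _ => mul_nonneg (hg n1 j).le (hq0 j)
    linarith
  · set n : Fin N := ⟨0, hN⟩
    refine (Tk_le hN k q n).trans (le_trans ?_ (ht2 n k))
    unfold Tkn
    rw [div_le_div_iff_of_pos_right (hg n k)]
    have hss : ∑ j ∈ univ.erase k, g n j * q j ≤ (∑ j, g n j) * S := by
      calc ∑ j ∈ univ.erase k, g n j * q j
          ≤ ∑ j, g n j * q j := Finset.sum_le_sum_of_subset_of_nonneg
            (Finset.erase_subset _ _) (fun j _ _ => mul_nonneg (hg n j).le (hq0 j))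
        _ ≤ ∑ j, g n j * S := Finset.sum_le_sum fun j _ =>
            mul_le_mul_of_nonneg_left (hqS j) (hg n j).le
        _ = (∑ j, g n j) * S := by rw [Finset.sum_mul]
    linarith

lemma step_lemma (hN : 0 < N) (hK : 0 < K) (hg : ∀ n k, 0 < g n k) (hδ : ∀ n, 0 < δsq n)
    {S c : ℝ} (hS : 0 < S) (hc0 : 0 < c) (hc1 : c < 1)
    {q pp : Fin K → ℝ} (hq0 : ∀ j, 0 ≤ q j)
    (hcq : ∀ n k, c * Tkn g δsq n k q ≤ δsq n / g n k)
    (hsq : ∑ k, q k = S) (hsp : ∑ k, pp k = S)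
    {m M : ℝ} (hm : 0 < m)
    (hbnd : ∀ k, m * q k ≤ pp k ∧ pp k ≤ M * q k) :
    ∃ m' M', 0 < m' ∧
      (∀ k, m' * (S * Tk g δsq k q / ∑ j, Tk g δsq j q)
              ≤ S * Tk g δsq k pp / ∑ j, Tk g δsq j pp ∧
            S * Tk g δsq k pp / ∑ j, Tk g δsq j pp
              ≤ M' * (S * Tk g δsq k q / ∑ j, Tk g δsq j q)) ∧
      m * (M' - m') ≤ (1 - c) * (M - m) * m' := by
  haveI : Nonempty (Fin K) := ⟨⟨0, hK⟩⟩
  -- m ≤ 1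
  have hm1 : m ≤ 1 := by
    have h1 : m * S ≤ S := by
      calc m * S = ∑ k, m * q k := by rw [← Finset.mul_sum, hsq]
        _ ≤ ∑ k, pp k := Finset.sum_le_sum fun k _ => (hbnd k).1
        _ = S := hsp
    nlinarith
  have hM1 : 1 ≤ M := by
    have h1 : S ≤ M * S := by
      calc S = ∑ k, pp k := hsp.symm
        _ ≤ ∑ k, M * q k := Finset.sum_le_sum fun k _ => (hbnd k).2
        _ = M * S := by rw [← Finset.mul_sum, hsq]
    nlinarith
  have hpp0 : ∀ j, 0 ≤ pp j := fun j =>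
    le_trans (mul_nonneg hm.le (hq0 j)) (hbnd j).1
  set α : ℝ := m + (1 - m) * c with hα_def
  set β : ℝ := M - (M - 1) * c with hβ_def
  have hα0 : 0 < α := by nlinarith
  have hβα : β - α = (1 - c) * (M - m) := by ring
  have hMm : m ≤ M := hm1.trans hM1
  have hup : ∀ k, Tk g δsq k pp ≤ β * Tk g δsq k q := fun k =>
    Tk_upper hN hg hc0.le hM1 hcq (fun j => (hbnd j).2) k
  have hlo : ∀ k, α * Tk g δsq k q ≤ Tk g δsq k pp := fun k =>
    Tk_lower hN hg hc0.le hm.le hm1 hcq (fun j => (hbnd j).1) k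
  have hTq : ∀ k, 0 < Tk g δsq k q := Tk_pos hN hg hδ hq0
  have hTp : ∀ k, 0 < Tk g δsq k pp := Tk_pos hN hg hδ hpp0
  set Dq : ℝ := ∑ j, Tk g δsq j q with hDq_def
  set Dp : ℝ := ∑ j, Tk g δsq j pp with hDp_def
  have hDq0 : 0 < Dq := Finset.sum_pos (fun k _ => hTq k) Finset.univ_nonempty
  have hDp0 : 0 < Dp := Finset.sum_pos (fun k _ => hTp k) Finset.univ_nonempty
  set σ : ℝ := Dq / Dp with hσ_def
  have hσ0 : 0 < σ := div_pos hDq0 hDp0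
  refine ⟨α * σ, β * σ, mul_pos hα0 hσ0, fun k => ?_, ?_⟩
  · constructor
    · have key : α * σ * (S * Tk g δsq k q / Dq) = S * (α * Tk g δsq k q) / Dp := by
        rw [hσ_def]
        field_simp
      rw [key]
      exact (div_le_div_iff_of_pos_right hDp0).mpr
        (mul_le_mul_of_nonneg_left (hlo k) hS.le)
    · have key : β * σ * (S * Tk g δsq k q / Dq) = S * (β * Tk g δsq k q) / Dp := by
        rw [hσ_def]
        field_simp
      rw [key]
      exact (div_le_div_iff_of_pos_right hDp0).mpr
        (mul_le_mul_of_nonneg_left (hup k) hS.le)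
  · have h1 : m * (β * σ - α * σ) = (1 - c) * (M - m) * (m * σ) := by
      simp only [hα_def, hβ_def]; ring
    have h2 : m * σ ≤ α * σ := by
      have : m ≤ α := by nlinarith
      exact mul_le_mul_of_nonneg_right this hσ0.le
    have h3 : 0 ≤ (1 - c) * (M - m) := by nlinarith
    calc m * (β * σ - α * σ) = (1 - c) * (M - m) * (m * σ) := h1
      _ ≤ (1 - c) * (M - m) * (α * σ) := mul_le_mul_of_nonneg_left h2 h3
end Aux

set_option maxHeartbeats 2000000 in
/-- The ULSum fixed-point iteration converges at a geometric rate to the unique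
optimal power vector `p^UL` of the uplink sum-power problem, from any strictly
positive starting point. -/
theorem ULSum_geometric_convergence (N K : ℕ) (hN : 0 < N) (hK : 0 < K)
    (g : Fin N → Fin K → ℝ) (hg : ∀ n k, 0 < g n k)
    (δsq : Fin N → ℝ) (hδ : ∀ n, 0 < δsq n)
    (pbar : Fin N → ℝ) (hpbar : ∀ n, 0 < pbar n)
    (pUL : Fin K → ℝ)
    -- p^UL is the (unique) optimal power vector of (P_sum^UL)
    (hULopt : ∃ aUL : Fin K → Fin N,
      (∀ k, 0 ≤ pUL k) ∧ (∑ k, pUL k ≤ ∑ n, pbar n) ∧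
      ∀ (p : Fin K → ℝ) (a : Fin K → Fin N),
        (∀ k, 0 ≤ p k) → (∑ k, p k ≤ ∑ n, pbar n) →
        (⨅ k, SINRul g δsq p a k) ≤ ⨅ k, SINRul g δsq pUL aUL k)
    (p : ℕ → Fin K → ℝ)
    (hp0 : ∀ k, 0 < p 0 k)
    (hiter : ∀ t, p (t + 1) =
      fun k => (∑ n, pbar n) * Tk g δsq k (p t) / ∑ j, Tk g δsq j (p t)) :
    ∃ C : ℝ, 0 ≤ C ∧ ∃ κ : ℝ, κ ∈ Set.Ioo (0 : ℝ) 1 ∧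
      ∀ t : ℕ, ‖p t - pUL‖ ≤ C * κ ^ t := by
  obtain ⟨aUL, hUL0, hULs, hULopt⟩ := hULopt
  haveI nK : Nonempty (Fin K) := ⟨⟨0, hK⟩⟩
  haveI nN : Nonempty (Fin N) := ⟨⟨0, hN⟩⟩
  set S : ℝ := ∑ n, pbar n with hS_def
  have hS : 0 < S := Finset.sum_pos (fun n _ => hpbar n) Finset.univ_nonempty
  -- tmin
  obtain ⟨nk₀, -, htminh⟩ := Finset.exists_min_image Finset.univ
    (fun nk : Fin N × Fin K => δsq nk.1 / g nk.1 nk.2) Finset.univ_nonempty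
  set tmin : ℝ := δsq nk₀.1 / g nk₀.1 nk₀.2 with htmin_def
  have htmin0 : 0 < tmin := div_pos (hδ _) (hg _ _)
  have htmin : ∀ n k, tmin ≤ δsq n / g n k := fun n k => htminh (n, k) (Finset.mem_univ _)
  -- tmax
  obtain ⟨nk₁, -, htmaxh⟩ := Finset.exists_max_image Finset.univ
    (fun nk : Fin N × Fin K => (δsq nk.1 + (∑ j, g nk.1 j) * S) / g nk.1 nk.2)
    Finset.univ_nonempty
  set tmax : ℝ := (δsq nk₁.1 + (∑ j, g nk₁.1 j) * S) / g nk₁.1 nk₁.2 with htmax_def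
  have htmax : ∀ n k, (δsq n + (∑ j, g n j) * S) / g n k ≤ tmax :=
    fun n k => htmaxh (n, k) (Finset.mem_univ _)
  have hgsum : ∀ n, 0 < ∑ j, g n j :=
    fun n => Finset.sum_pos (fun j _ => hg n j) Finset.univ_nonempty
  have htminmax : tmin ≤ tmax := by
    refine (htmin nk₁.1 nk₁.2).trans (le_trans ?_ (le_refl tmax))
    rw [htmax_def, div_le_div_iff_of_pos_right (hg _ _)]
    nlinarith [hgsum nk₁.1, hS]
  have htmax0 : 0 < tmax := htmin0.trans_le htminmax
  have hK0 : (0 : ℝ) < (K : ℝ) := by exact_mod_cast hK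
  -- box bounds
  set A : ℝ := S * tmin / ((K : ℝ) * tmax) with hA_def
  set B : ℝ := S * tmax / ((K : ℝ) * tmin) with hB_def
  have hA0 : 0 < A := by positivity
  have hB0 : 0 < B := by positivity
  have hAB : A ≤ B := by
    rw [hA_def, hB_def]
    apply div_le_div₀ (by positivity) (by nlinarith) (by positivity) (by nlinarith)
  -- bounds on Tk over the simplex
  have hTb : ∀ q : Fin K → ℝ, (∀ j, 0 ≤ q j) → (∑ j, q j ≤ S) →
      ∀ k, tmin ≤ Tk g δsq k q ∧ Tk g δsq k q ≤ tmax :=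
    fun q h1 h2 k => Tk_bounds hN hg hδ htmin htmax h1 h2 k
  have hFbox : ∀ q : Fin K → ℝ, (∀ j, 0 ≤ q j) → (∑ j, q j ≤ S) →
      ∀ k, A ≤ S * Tk g δsq k q / ∑ j, Tk g δsq j q ∧
        S * Tk g δsq k q / ∑ j, Tk g δsq j q ≤ B := by
    intro q h1 h2 k
    have hb := hTb q h1 h2
    have hden1 : (K : ℝ) * tmin ≤ ∑ j, Tk g δsq j q := by
      calc (K : ℝ) * tmin = ∑ _j : Fin K, tmin := by
            rw [Finset.sum_const, Finset.card_univ, Fintype.card_fin, nsmul_eq_mul]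
        _ ≤ ∑ j, Tk g δsq j q := Finset.sum_le_sum fun j _ => (hb j).1
    have hden2 : ∑ j, Tk g δsq j q ≤ (K : ℝ) * tmax := by
      calc ∑ j, Tk g δsq j q ≤ ∑ _j : Fin K, tmax := Finset.sum_le_sum fun j _ => (hb j).2
        _ = (K : ℝ) * tmax := by
            rw [Finset.sum_const, Finset.card_univ, Fintype.card_fin, nsmul_eq_mul]
    have hdenpos : 0 < ∑ j, Tk g δsq j q := lt_of_lt_of_le (by positivity) hden1
    constructor
    · rw [hA_def]
      apply div_le_div₀ (by nlinarith [(hb k).1]) (by nlinarith [(hb k).1]) hdenpos hden2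
    · rw [hB_def]
      apply div_le_div₀ (by positivity) (by nlinarith [(hb k).2]) (by positivity) hden1
  -- the contraction constant c
  obtain ⟨n₂, -, hch⟩ := Finset.exists_min_image Finset.univ
    (fun n => δsq n / (δsq n + B * ∑ j, g n j)) Finset.univ_nonempty
  set c : ℝ := δsq n₂ / (δsq n₂ + B * ∑ j, g n₂ j) with hc_def
  have hc0 : 0 < c := div_pos (hδ n₂) (by nlinarith [hδ n₂, hgsum n₂, hB0])
  have hc1 : c < 1 := by
    rw [hc_def, div_lt_one (by nlinarith [hδ n₂, hgsum n₂, hB0])]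
    nlinarith [hgsum n₂, hB0]
  have hcprop : ∀ q : Fin K → ℝ, (∀ j, 0 ≤ q j) → (∀ j, q j ≤ B) →
      ∀ n k, c * Tkn g δsq n k q ≤ δsq n / g n k := by
    intro q h0 hqB n k
    have h1 : c ≤ δsq n / (δsq n + B * ∑ j, g n j) := hch n (Finset.mem_univ n)
    have hX : 0 < δsq n + B * ∑ j, g n j := by nlinarith [hδ n, hgsum n, hB0]
    have h2 : Tkn g δsq n k q ≤ (δsq n + B * ∑ j, g n j) / g n k := by
      unfold Tkn
      rw [div_le_div_iff_of_pos_right (hg n k)]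
      have hs : ∑ j ∈ univ.erase k, g n j * q j ≤ B * ∑ j, g n j := by
        calc ∑ j ∈ univ.erase k, g n j * q j
            ≤ ∑ j, g n j * q j := Finset.sum_le_sum_of_subset_of_nonneg
              (Finset.erase_subset _ _) (fun j _ _ => mul_nonneg (hg n j).le (h0 j))
          _ ≤ ∑ j, g n j * B := Finset.sum_le_sum fun j _ =>
              mul_le_mul_of_nonneg_left (hqB j) (hg n j).le
          _ = B * ∑ j, g n j := by rw [← Finset.sum_mul]; ring
      linarith
    have hTknpos := Tkn_pos hg hδ h0 n k
    calc c * Tkn g δsq n k q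
        ≤ (δsq n / (δsq n + B * ∑ j, g n j)) * ((δsq n + B * ∑ j, g n j) / g n k) :=
          mul_le_mul h1 h2 hTknpos.le
            (div_nonneg (hδ n).le (by nlinarith [hδ n, hgsum n, hB0]))
      _ = δsq n / g n k := by
          rw [div_mul_div_comm, mul_comm (δsq n), mul_div_mul_left _ _ hX.ne']
  set lam : ℝ := 1 - c with hlam_def
  have hlam0 : 0 < lam := by rw [hlam_def]; linarith
  have hlam1 : lam < 1 := by rw [hlam_def]; linarith
  -- basic sequence facts
  have hppos : ∀ t k, 0 < p t k := by
    intro t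
    induction t with
    | zero => exact hp0
    | succ t ih =>
      intro k
      simp only [hiter t]
      have hT := Tk_pos hN hg hδ (fun j => (ih j).le)
      exact div_pos (mul_pos hS (hT k))
        (Finset.sum_pos (fun j _ => hT j) Finset.univ_nonempty)
  have hpsum : ∀ t, ∑ k, p (t + 1) k = S := by
    intro t
    simp only [hiter t]
    rw [← Finset.sum_div, ← Finset.mul_sum, mul_div_assoc, div_self, mul_one]
    exact ne_of_gt (Finset.sum_pos
      (fun j _ => Tk_pos hN hg hδ (fun i => (hppos t i).le) j) Finset.univ_nonempty)
  have hbox : ∀ t k, A ≤ p (t + 2) k ∧ p (t + 2) k ≤ B := by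
    intro t k
    simp only [hiter (t + 1)]
    exact hFbox (p (t + 1)) (fun j => (hppos (t + 1) j).le) (le_of_eq (hpsum t)) k
  -- geometric decay of consecutive ratios
  set e₀ : ℝ := (B / A - A / B) * (B / A) with he₀_def
  have hBA1 : 1 ≤ B / A := (one_le_div hA0).mpr hAB
  have hAB1 : A / B ≤ 1 := (div_le_one hB0).mpr hAB
  have he₀0 : 0 ≤ e₀ := by
    rw [he₀_def]
    nlinarith
  have hbase_gap : B / A - A / B ≤ e₀ * (A / B) := by
    rw [he₀_def]
    have : (B / A) * (A / B) = 1 := by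
      field_simp
    nlinarith
  -- m ≤ 1 ≤ M helper
  have hm1M1 : ∀ (m M : ℝ) (x y : Fin K → ℝ), (∑ k, x k = S) → (∑ k, y k = S) →
      (∀ k, m * x k ≤ y k ∧ y k ≤ M * x k) → m ≤ 1 ∧ 1 ≤ M := by
    intro m M x y hx hy hb
    constructor
    · have h1 : m * S ≤ S := by
        calc m * S = ∑ k, m * x k := by rw [← Finset.mul_sum, hx]
          _ ≤ ∑ k, y k := Finset.sum_le_sum fun k _ => (hb k).1
          _ = S := hy
      nlinarith
    · have h1 : S ≤ M * S := by
        calc S = ∑ k, y k := hy.symm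
          _ ≤ ∑ k, M * x k := Finset.sum_le_sum fun k _ => (hb k).2
          _ = M * S := by rw [← Finset.mul_sum, hx]
      nlinarith
  -- invariant for consecutive iterates
  have hJ : ∀ t, ∃ m M : ℝ, 0 < m ∧ M - m ≤ e₀ * lam ^ t * m ∧
      ∀ k, m * p (t + 2) k ≤ p (t + 3) k ∧ p (t + 3) k ≤ M * p (t + 2) k := by
    intro t
    induction t with
    | zero =>
      refine ⟨A / B, B / A, div_pos hA0 hB0, ?_, ?_⟩
      · rw [pow_zero, mul_one]
        exact hbase_gap
      · intro k
        have h2 := hbox 0 k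
        have h3 := hbox 1 k
        constructor
        · calc A / B * p 2 k ≤ A / B * B :=
              mul_le_mul_of_nonneg_left h2.2 (div_pos hA0 hB0).le
            _ = A := div_mul_cancel₀ A hB0.ne'
            _ ≤ p 3 k := h3.1
        · calc p 3 k ≤ B := h3.2
            _ = B / A * A := (div_mul_cancel₀ B hA0.ne').symm
            _ ≤ B / A * p 2 k := mul_le_mul_of_nonneg_left h2.1 (by positivity)
    | succ t ih =>
      obtain ⟨m, M, hm, hgap, hbnd⟩ := ih
      obtain ⟨m', M', hm', hbnd', hgap'⟩ := step_lemma hN hK hg hδ hS hc0 hc1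
        (fun j => (hppos (t + 2) j).le)
        (hcprop (p (t + 2)) (fun j => (hppos (t + 2) j).le) (fun j => (hbox t j).2))
        (hpsum (t + 1)) (hpsum (t + 2)) hm hbnd
      refine ⟨m', M', hm', ?_, ?_⟩
      · have h1 : m * (M' - m') ≤ (1 - c) * (e₀ * lam ^ t * m) * m' := by
          refine le_trans hgap' ?_
          have h2 : 0 ≤ (1 - c) * m' := mul_nonneg (by linarith) hm'.le
          nlinarith
        have h2 : (1 - c) * (e₀ * lam ^ t * m) * m' = m * (e₀ * lam ^ (t + 1) * m') := by
          rw [hlam_def]; ring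
        rw [h2] at h1
        exact le_of_mul_le_mul_left h1 hm
      · intro k
        have hb := hbnd' k
        have e1 : p (t + 3) k = S * Tk g δsq k (p (t + 2)) / ∑ j, Tk g δsq j (p (t + 2)) := by
          rw [hiter (t + 2)]
        have e2 : p (t + 4) k = S * Tk g δsq k (p (t + 3)) / ∑ j, Tk g δsq j (p (t + 3)) := by
          rw [hiter (t + 3)]
        rw [e1, e2]
        exact hb
  -- distance decay, Cauchy, limit
  have hdist : ∀ t, dist (p (t + 2)) (p (t + 3)) ≤ e₀ * B * lam ^ t := by
    intro t
    obtain ⟨m, M, hm, hgap, hbnd⟩ := hJ t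
    obtain ⟨hm1, hM1⟩ := hm1M1 m M (p (t + 2)) (p (t + 3))
      (hpsum (t + 1)) (hpsum (t + 2)) hbnd
    rw [dist_pi_le_iff (by positivity)]
    intro k
    rw [Real.dist_eq, abs_le]
    have hb := hbnd k
    have hx := hbox t k
    have hlampow : (0 : ℝ) ≤ lam ^ t := by positivity
    have key : (M - m) * p (t + 2) k ≤ e₀ * B * lam ^ t := by
      calc (M - m) * p (t + 2) k ≤ (e₀ * lam ^ t * m) * p (t + 2) k :=
            mul_le_mul_of_nonneg_right hgap (le_trans hA0.le hx.1)
        _ ≤ (e₀ * lam ^ t * 1) * B := by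
            apply mul_le_mul (by nlinarith) hx.2 (le_trans hA0.le hx.1) (by positivity)
        _ = e₀ * B * lam ^ t := by ring
    constructor
    · nlinarith [hx.1, hA0]
    · nlinarith [hx.1, hA0]
  have hcauchy : CauchySeq (fun t => p (t + 2)) :=
    cauchySeq_of_le_geometric lam (e₀ * B) hlam1 hdist
  obtain ⟨ps, hps⟩ := cauchySeq_tendsto_of_complete hcauchy
  have hpsk : ∀ k, Filter.Tendsto (fun t => p (t + 2) k) Filter.atTop (nhds (ps k)) :=
    fun k => tendsto_pi_nhds.mp hps k
  have hpsA : ∀ k, A ≤ ps k := fun k => ge_of_tendsto' (hpsk k) (fun t => (hbox t k).1)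
  have hpsB : ∀ k, ps k ≤ B := fun k => le_of_tendsto' (hpsk k) (fun t => (hbox t k).2)
  have hps0 : ∀ k, 0 < ps k := fun k => hA0.trans_le (hpsA k)
  have hpssum : ∑ k, ps k = S := by
    have h1 : Filter.Tendsto (fun t => ∑ k, p (t + 2) k) Filter.atTop (nhds (∑ k, ps k)) :=
      tendsto_finset_sum _ fun k _ => hpsk k
    have h2 : (fun t => ∑ k, p (t + 2) k) = fun _ => S := funext fun t => hpsum (t + 1)
    rw [h2] at h1
    exact tendsto_nhds_unique h1 tendsto_const_nhds
  -- Lipschitz constant for Tk, fixed point of the iteration map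
  obtain ⟨nk₂, -, hLh⟩ := Finset.exists_max_image Finset.univ
    (fun nk : Fin N × Fin K => (∑ j, g nk.1 j) / g nk.1 nk.2) Finset.univ_nonempty
  set L : ℝ := (∑ j, g nk₂.1 j) / g nk₂.1 nk₂.2 with hL_def
  have hL : ∀ n k, (∑ j, g n j) / g n k ≤ L := fun n k => hLh (n, k) (Finset.mem_univ _)
  have hL0 : 0 ≤ L := le_trans (le_of_lt (div_pos (hgsum nk₂.1) (hg _ _))) (le_refl L)
  have hTkcont : ∀ k, Filter.Tendsto (fun t => Tk g δsq k (p (t + 2)))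
      Filter.atTop (nhds (Tk g δsq k ps)) := by
    intro k
    have hbound : ∀ t, dist (Tk g δsq k (p (t + 2))) (Tk g δsq k ps)
        ≤ L * dist (p (t + 2)) ps := by
      intro t
      rw [Real.dist_eq, abs_le]
      have h1 := Tk_lip (δsq := δsq) hN hg hL (p (t + 2)) ps k
      have h2 := Tk_lip (δsq := δsq) hN hg hL ps (p (t + 2)) k
      rw [dist_comm ps (p (t + 2))] at h2
      constructor <;> linarith
    have hdd : Filter.Tendsto (fun t => dist (p (t + 2)) ps) Filter.atTop (nhds 0) :=
      tendsto_iff_dist_tendsto_zero.mp hps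
    have hdd2 : Filter.Tendsto (fun t => L * dist (p (t + 2)) ps) Filter.atTop (nhds 0) := by
      have := hdd.const_mul L
      rwa [mul_zero] at this
    refine tendsto_iff_dist_tendsto_zero.mpr ?_
    exact squeeze_zero (fun t => dist_nonneg) hbound hdd2
  have hDps : 0 < ∑ j, Tk g δsq j ps :=
    Finset.sum_pos (fun j _ => Tk_pos hN hg hδ (fun i => (hps0 i).le) j) Finset.univ_nonempty
  have hfix : ∀ k, S * Tk g δsq k ps / ∑ j, Tk g δsq j ps = ps k := by
    intro k
    have hDlim : Filter.Tendsto (fun t => ∑ j, Tk g δsq j (p (t + 2)))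
        Filter.atTop (nhds (∑ j, Tk g δsq j ps)) :=
      tendsto_finset_sum _ fun j _ => hTkcont j
    have hFlim : Filter.Tendsto
        (fun t => S * Tk g δsq k (p (t + 2)) / ∑ j, Tk g δsq j (p (t + 2)))
        Filter.atTop (nhds (S * Tk g δsq k ps / ∑ j, Tk g δsq j ps)) :=
      (Filter.Tendsto.const_mul S (hTkcont k)).div hDlim hDps.ne'
    have hshift : Filter.Tendsto (fun t => p (t + 3) k) Filter.atTop (nhds (ps k)) :=
      (hpsk k).comp (Filter.tendsto_add_atTop_nat 1)
    have e : (fun t => S * Tk g δsq k (p (t + 2)) / ∑ j, Tk g δsq j (p (t + 2)))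
        = fun t => p (t + 3) k := funext fun t => by rw [hiter (t + 2)]
    rw [e] at hFlim
    exact tendsto_nhds_unique hFlim hshift
  -- invariant relative to the limit point
  have hI : ∀ t, ∃ m M : ℝ, 0 < m ∧ M - m ≤ e₀ * lam ^ t * m ∧
      ∀ k, m * ps k ≤ p (t + 2) k ∧ p (t + 2) k ≤ M * ps k := by
    intro t
    induction t with
    | zero =>
      refine ⟨A / B, B / A, div_pos hA0 hB0, ?_, ?_⟩
      · rw [pow_zero, mul_one]
        exact hbase_gap
      · intro k
        have h2 := hbox 0 k
        constructor
        · calc A / B * ps k ≤ A / B * B :=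
              mul_le_mul_of_nonneg_left (hpsB k) (div_pos hA0 hB0).le
            _ = A := div_mul_cancel₀ A hB0.ne'
            _ ≤ p 2 k := h2.1
        · calc p 2 k ≤ B := h2.2
            _ = B / A * A := (div_mul_cancel₀ B hA0.ne').symm
            _ ≤ B / A * ps k := mul_le_mul_of_nonneg_left (hpsA k) (by positivity)
    | succ t ih =>
      obtain ⟨m, M, hm, hgap, hbnd⟩ := ih
      obtain ⟨m', M', hm', hbnd', hgap'⟩ := step_lemma hN hK hg hδ hS hc0 hc1
        (fun j => (hps0 j).le)
        (hcprop ps (fun j => (hps0 j).le) hpsB)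
        hpssum (hpsum (t + 1)) hm hbnd
      refine ⟨m', M', hm', ?_, ?_⟩
      · have h1 : m * (M' - m') ≤ (1 - c) * (e₀ * lam ^ t * m) * m' := by
          refine le_trans hgap' ?_
          have h2 : 0 ≤ (1 - c) * m' := mul_nonneg (by linarith) hm'.le
          nlinarith
        have h2 : (1 - c) * (e₀ * lam ^ t * m) * m' = m * (e₀ * lam ^ (t + 1) * m') := by
          rw [hlam_def]; ring
        rw [h2] at h1
        exact le_of_mul_le_mul_left h1 hm
      · intro k
        have hb := hbnd' k
        have e1 : p (t + 3) k = S * Tk g δsq k (p (t + 2)) / ∑ j, Tk g δsq j (p (t + 2)) := by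
          rw [hiter (t + 2)]
        rw [hfix k] at hb
        rw [e1]
        exact hb
  -- the optimal SINR value
  set γ : ℝ := S / ∑ j, Tk g δsq j ps with hγ_def
  have hγ0 : 0 < γ := div_pos hS hDps
  have hfix' : ∀ k, ps k = γ * Tk g δsq k ps := by
    intro k
    rw [← hfix k, hγ_def, mul_div_right_comm]
  choose astar hastar using fun k => Tk_attained (g := g) (δsq := δsq) hN k ps
  have hSINRstar : ∀ k, SINRul g δsq ps astar k = γ := by
    intro k
    have hd0 : 0 < δsq (astar k) + ∑ j ∈ univ.erase k, g (astar k) j * ps j := by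
      have : 0 ≤ ∑ j ∈ univ.erase k, g (astar k) j * ps j :=
        Finset.sum_nonneg fun j _ => mul_nonneg (hg _ j).le (hps0 j).le
      linarith [hδ (astar k)]
    have hTps : ps k = γ * Tkn g δsq (astar k) k ps := by
      rw [hfix' k, hastar k]
    unfold SINRul
    rw [hTps]
    unfold Tkn
    rw [show g (astar k) k * (γ * ((δsq (astar k) + ∑ j ∈ univ.erase k, g (astar k) j * ps j)
        / g (astar k) k)) = γ * (δsq (astar k) + ∑ j ∈ univ.erase k, g (astar k) j * ps j) by
      field_simp
      exact div_self (hg (astar k) k).ne']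
    rw [mul_div_assoc, div_self hd0.ne', mul_one]
  have hiInfstar : ⨅ k, SINRul g δsq ps astar k = γ := by
    simp only [hSINRstar, ciInf_const]
  have hopt := hULopt ps astar (fun k => (hps0 k).le) (le_of_eq hpssum)
  rw [hiInfstar] at hopt
  have hvk : ∀ k, γ ≤ SINRul g δsq pUL aUL k := fun k =>
    le_trans hopt (ciInf_le (Set.Finite.bddBelow (Set.finite_range _)) k)
  have hULTk : ∀ k, γ * Tk g δsq k pUL ≤ pUL k := by
    intro k
    have h1 := hvk k
    unfold SINRul at h1
    have hd0 : 0 < δsq (aUL k) + ∑ j ∈ univ.erase k, g (aUL k) j * pUL j := by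
      have : 0 ≤ ∑ j ∈ univ.erase k, g (aUL k) j * pUL j :=
        Finset.sum_nonneg fun j _ => mul_nonneg (hg _ j).le (hUL0 j)
      linarith [hδ (aUL k)]
    have h2 : γ * (δsq (aUL k) + ∑ j ∈ univ.erase k, g (aUL k) j * pUL j)
        ≤ g (aUL k) k * pUL k := (le_div_iff₀ hd0).mp h1
    have h3 : γ * Tkn g δsq (aUL k) k pUL ≤ pUL k := by
      unfold Tkn
      rw [mul_div_assoc', div_le_iff₀ (hg (aUL k) k)]
      nlinarith
    exact le_trans (mul_le_mul_of_nonneg_left (Tk_le hN k pUL (aUL k)) hγ0.le) h3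
  have hULpos : ∀ k, 0 < pUL k := fun k =>
    lt_of_lt_of_le (mul_pos hγ0 (Tk_pos hN hg hδ hUL0 k)) (hULTk k)
  -- pUL = ps
  obtain ⟨k₀, -, hk₀⟩ := Finset.exists_min_image Finset.univ
    (fun k => pUL k / ps k) Finset.univ_nonempty
  set μ : ℝ := pUL k₀ / ps k₀ with hμ_def
  have hμ0 : 0 < μ := div_pos (hULpos k₀) (hps0 k₀)
  have hμle : ∀ k, μ * ps k ≤ pUL k := by
    intro k
    exact (le_div_iff₀ (hps0 k)).mp (hk₀ k (Finset.mem_univ k))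
  have hμ1 : 1 ≤ μ := by
    by_contra hcon
    push_neg at hcon
    have hTlow := Tk_lower (δsq := δsq) hN hg hc0.le hμ0.le hcon.le
      (hcprop ps (fun j => (hps0 j).le) hpsB) hμle k₀
    have h1 : γ * ((μ + (1 - μ) * c) * Tk g δsq k₀ ps) ≤ pUL k₀ :=
      le_trans (mul_le_mul_of_nonneg_left hTlow hγ0.le) (hULTk k₀)
    have h2 : pUL k₀ = μ * ps k₀ := (div_mul_cancel₀ (pUL k₀) (hps0 k₀).ne').symm
    have h3 : ps k₀ = γ * Tk g δsq k₀ ps := hfix' k₀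
    have hTk0 := Tk_pos hN hg hδ (fun i => (hps0 i).le) k₀
    nlinarith [mul_pos hγ0 hTk0, mul_pos (mul_pos (sub_pos.2 hcon) hc0) (mul_pos hγ0 hTk0)]
  have hge : ∀ k, ps k ≤ pUL k := by
    intro k
    have := hμle k
    nlinarith [hps0 k]
  have hULeq : pUL = ps := by
    have hsums : ∑ k, pUL k = ∑ k, ps k :=
      le_antisymm (hULs.trans_eq hpssum.symm)
        (Finset.sum_le_sum fun k _ => hge k)
    funext k
    by_contra hne
    have hlt : ps k < pUL k := lt_of_le_of_ne (hge k) fun e => hne e.symm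
    have hstrict : ∑ j, ps j < ∑ j, pUL j :=
      Finset.sum_lt_sum (fun j _ => hge j) ⟨k, Finset.mem_univ k, hlt⟩
    linarith
  -- final geometric bound
  have hnorm : ∀ t, ‖p (t + 2) - ps‖ ≤ e₀ * B * lam ^ t := by
    intro t
    obtain ⟨m, M, hm, hgap, hbnd⟩ := hI t
    obtain ⟨hm1, hM1⟩ := hm1M1 m M ps (p (t + 2)) hpssum (hpsum (t + 1)) hbnd
    rw [pi_norm_le_iff_of_nonneg (by positivity)]
    intro k
    have hb := hbnd k
    have hxB := hpsB k
    have hxA := hpsA k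
    have hlampow : (0 : ℝ) ≤ lam ^ t := by positivity
    have key : (M - m) * ps k ≤ e₀ * B * lam ^ t := by
      calc (M - m) * ps k ≤ (e₀ * lam ^ t * m) * ps k :=
            mul_le_mul_of_nonneg_right hgap (le_trans hA0.le hxA)
        _ ≤ (e₀ * lam ^ t * 1) * B := by
            apply mul_le_mul (by nlinarith) hxB (le_trans hA0.le hxA) (by positivity)
        _ = e₀ * B * lam ^ t := by ring
    rw [Pi.sub_apply, Real.norm_eq_abs, abs_le]
    constructor
    · nlinarith [hxA, hA0]
    · nlinarith [hxA, hA0]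
  rw [hULeq]
  have hlam2 : (0:ℝ) < lam ^ 2 := by positivity
  refine ⟨max (e₀ * B / lam ^ 2) (max ‖p 0 - ps‖ (‖p 1 - ps‖ / lam)), ?_, lam,
    ⟨hlam0, hlam1⟩, ?_⟩
  · exact le_trans (by positivity) (le_max_left _ _)
  · intro t
    match t with
    | 0 =>
      rw [pow_zero, mul_one]
      exact le_trans (le_max_left _ _) (le_max_right _ _)
    | 1 =>
      rw [pow_one]
      have h2 : ‖p 1 - ps‖ / lam
          ≤ max (e₀ * B / lam ^ 2) (max ‖p 0 - ps‖ (‖p 1 - ps‖ / lam)) :=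
        le_trans (le_max_right _ _) (le_max_right _ _)
      calc ‖p 1 - ps‖ = ‖p 1 - ps‖ / lam * lam := (div_mul_cancel₀ _ hlam0.ne').symm
        _ ≤ _ := mul_le_mul_of_nonneg_right h2 hlam0.le
    | (t + 2) =>
      refine le_trans (hnorm t) ?_
      have heq : e₀ * B * lam ^ t = e₀ * B / lam ^ 2 * lam ^ (t + 2) := by
        rw [pow_add]
        field_simp
      rw [heq]
      apply mul_le_mul_of_nonneg_right (le_max_left _ _) (by positivity)
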